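/- Suppose μ and Λ satisfy the continuity and density assumptions of Theorem 1. If ν is a Λ-pseudo tangent measure of μ at some point Q ∈ Σ, then 0 ∈ spt(ν), i.e. ν(B(0,r)) > 0 for every r > 0. -/

import Mathlib

open MeasureTheory Metric Filter
open scoped RealInnerProductSpace ENNReal Topology

noncomputable section

abbrev Euc (n : ℕ) : Type := EuclideanSpace ℝ (Fin (n + 1))

/-- A continuous linear equivalence regarded as a continuous linear map. -/
def clm {n : ℕ} (A : Euc n ≃L[ℝ] Euc n) : Euc n →L[ℝ] Euc n := A

/-- Smallest eigenvalue of a symmetric operator, via the Rayleigh quotient. -/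
def lamMin {n : ℕ} (A : Euc n →L[ℝ] Euc n) : ℝ :=
  sInf {t : ℝ | ∃ v : Euc n, ‖v‖ = 1 ∧ ⟪A v, v⟫ = t}

/-- Largest eigenvalue of a symmetric operator, via the Rayleigh quotient. -/
def lamMax {n : ℕ} (A : Euc n →L[ℝ] Euc n) : ℝ :=
  sSup {t : ℝ | ∃ v : Euc n, ‖v‖ = 1 ∧ ⟪A v, v⟫ = t}

/-- Symmetric positive definite operator. -/
def IsSymPD {n : ℕ} (A : Euc n →L[ℝ] Euc n) : Prop :=
  (∀ v w : Euc n, ⟪A v, w⟫ = ⟪v, A w⟫) ∧ ∀ v : Euc n, v ≠ 0 → 0 < ⟪A v, v⟫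

/-- Local Hölder continuity (with exponent β) of a matrix-valued map, in operator norm. -/
def HolderOnCompacts {n : ℕ} (Λ : Euc n → (Euc n ≃L[ℝ] Euc n)) (β : ℝ) : Prop :=
  ∀ K : Set (Euc n), IsCompact K → ∃ H > 0, ∀ X ∈ K, ∀ Y ∈ K,
    ‖clm (Λ X) - clm (Λ Y)‖ ≤ H * ‖X - Y‖ ^ β

/-- The ellipse `B_Λ(X, r) = X + Λ(X)·B(0,r)`. -/
def BLam {n : ℕ} (Λ : Euc n → (Euc n ≃L[ℝ] Euc n)) (X : Euc n) (r : ℝ) :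
    Set (Euc n) :=
  (fun W => X + (Λ X) W) '' Metric.ball (0 : Euc n) r

/-- The non-concentric ellipse `B_Λ(X, X̄, r) = X + Λ(X̄)·B(0,r)`. -/
def BLam2 {n : ℕ} (Λ : Euc n → (Euc n ≃L[ℝ] Euc n)) (X Xb : Euc n) (r : ℝ) :
    Set (Euc n) :=
  (fun W => X + (Λ Xb) W) '' Metric.ball (0 : Euc n) r

/-- Lebesgue measure of the unit ball of `ℝ^n`. -/
def omegaN (n : ℕ) : ℝ :=
  (MeasureTheory.volume (Metric.ball (0 : EuclideanSpace ℝ (Fin n)) 1)).toReal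

/-- Support of a measure. -/
def msupport {n : ℕ} (μ : Measure (Euc n)) : Set (Euc n) :=
  {X | ∀ r : ℝ, 0 < r → 0 < μ (Metric.ball X r)}

/-- Density assumption of Theorem 1: Hölder convergence of anisotropic density ratios to 1. -/
def DensityHolder {n : ℕ} (Λ : Euc n → (Euc n ≃L[ℝ] Euc n)) (μ : Measure (Euc n)) (α : ℝ) :
    Prop :=
  ∀ K : Set (Euc n), IsCompact K → ∃ C > 0, ∀ X ∈ msupport μ ∩ K, ∀ r : ℝ, 0 < r → r ≤ 1 →
    |(μ (BLam Λ X r)).toReal / (omegaN n * r ^ n) - 1| ≤ C * r ^ α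

/-- Doubling assumption of Theorem 2: Hölder asymptotically optimal doubling. -/
def DoublingHolder {n : ℕ} (Λ : Euc n → (Euc n ≃L[ℝ] Euc n)) (μ : Measure (Euc n)) (α : ℝ) :
    Prop :=
  ∀ K : Set (Euc n), IsCompact K → ∃ C > 0, ∀ X ∈ msupport μ ∩ K,
    ∀ t ∈ Set.Icc (1 / 2 : ℝ) 1, ∀ r : ℝ, 0 < r → r ≤ 1 →
      |(μ (BLam Λ X (t * r))).toReal / (μ (BLam Λ X r)).toReal - t ^ n| ≤ C * r ^ α

/-- `μ` is Λ-asymptotically optimally doubling of dimension `m`. -/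
def IsLamAOD {n : ℕ} (Λ : Euc n → (Euc n ≃L[ℝ] Euc n)) (μ : Measure (Euc n)) (m : ℕ) : Prop :=
  ∀ K : Set (Euc n), IsCompact K → ∀ ε : ℝ, 0 < ε → ∃ r₀ > 0, ∀ r : ℝ, 0 < r → r ≤ r₀ →
    ∀ X ∈ msupport μ ∩ K, ∀ t ∈ Set.Icc (1 / 2 : ℝ) 1,
      |(μ (BLam Λ X (t * r))).toReal / (μ (BLam Λ X r)).toReal - t ^ m| ≤ ε

/-- Anisotropic blow-up map `T^Λ_{P,r}(Z) = Λ(P)⁻¹((Z − P)/r)`. -/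
def TLam {n : ℕ} (Λ : Euc n → (Euc n ≃L[ℝ] Euc n)) (P : Euc n) (r : ℝ)
    (Z : Euc n) : Euc n :=
  (Λ P).symm (r⁻¹ • (Z - P))

/-- The rescaled measure `μ_{P,r} = μ(B_Λ(P,r))⁻¹ · (T^Λ_{P,r})_* μ`. -/
def scaled {n : ℕ} (Λ : Euc n → (Euc n ≃L[ℝ] Euc n)) (μ : Measure (Euc n))
    (P : Euc n) (r : ℝ) : Measure (Euc n) :=
  (μ (BLam Λ P r))⁻¹ • Measure.map (TLam Λ P r) μ

/-- Weak convergence of a sequence of measures tested against `C_c` functions. -/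
def WeakLim {n : ℕ} (μs : ℕ → Measure (Euc n)) (ν : Measure (Euc n)) : Prop :=
  ∀ f : Euc n → ℝ, Continuous f → HasCompactSupport f →
    Tendsto (fun i => ∫ x, f x ∂(μs i)) atTop (nhds (∫ x, f x ∂ν))

/-- `ν` is a Λ-pseudo tangent measure of `μ` at `Q`. -/
def IsPseudoTangentAt {n : ℕ} (Λ : Euc n → (Euc n ≃L[ℝ] Euc n)) (μ : Measure (Euc n))
    (Q : Euc n) (ν : Measure (Euc n)) : Prop :=
  ν ≠ 0 ∧ ∃ Qs : ℕ → Euc n, ∃ ρs : ℕ → ℝ,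
    (∀ i, Qs i ∈ msupport μ) ∧ (∀ i, 0 < ρs i) ∧
    Tendsto Qs atTop (nhds Q) ∧ Tendsto ρs atTop (nhds (0 : ℝ)) ∧
    WeakLim (fun i => scaled Λ μ (Qs i) (ρs i)) ν

/-- `λ_min(K)`: infimum of smallest eigenvalues over the 1-neighborhood of `S`. -/
def lamMinOn {n : ℕ} (Λ : Euc n → (Euc n ≃L[ℝ] Euc n)) (S : Set (Euc n)) : ℝ :=
  sInf ((fun X => lamMin (clm (Λ X))) '' {X : Euc n | Metric.infDist X S ≤ 1})

/-- `λ_max(K)`: supremum of largest eigenvalues over the 1-neighborhood of `S`. -/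
def lamMaxOn {n : ℕ} (Λ : Euc n → (Euc n ≃L[ℝ] Euc n)) (S : Set (Euc n)) : ℝ :=
  sSup ((fun X => lamMax (clm (Λ X))) '' {X : Euc n | Metric.infDist X S ≤ 1})

/-- Local eccentricity `e_Λ(K) = λ_max(K)/λ_min(K)`. -/
def eLam {n : ℕ} (Λ : Euc n → (Euc n ≃L[ℝ] Euc n)) (S : Set (Euc n)) : ℝ :=
  lamMaxOn Λ S / lamMinOn Λ S

/-- Bilateral β-number `bβ_S(X,r)`: infimum over affine `m`-planes through `X` of the
normalized Hausdorff distance between `S` and the plane inside `B(X,r)`. -/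
def bbeta {n : ℕ} (m : ℕ) (S : Set (Euc n)) (X : Euc n) (r : ℝ) : ℝ :=
  sInf {d : ℝ | ∃ P : AffineSubspace ℝ (Euc n), X ∈ P ∧ Module.finrank ℝ P.direction = m ∧
    d = (1 / r) * Metric.hausdorffDist (S ∩ Metric.ball X r)
          ((P : Set (Euc n)) ∩ Metric.ball X r)}

/-- Unilateral (Jones-type) β-number `β_S(X,r)`. -/
def betaS {n : ℕ} (m : ℕ) (S : Set (Euc n)) (X : Euc n) (r : ℝ) : ℝ :=
  sInf {d : ℝ | ∃ P : AffineSubspace ℝ (Euc n), X ∈ P ∧ Module.finrank ℝ P.direction = m ∧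
    d = sSup {t : ℝ | ∃ Y ∈ S ∩ Metric.ball X r, t = Metric.infDist Y (P : Set (Euc n)) / r}}

/-- The singular set: points where the bilateral β-numbers do not tend to 0. -/
def singularSet {n : ℕ} (m : ℕ) (S : Set (Euc n)) : Set (Euc n) :=
  {X | X ∈ S ∧ 0 < Filter.limsup (fun r => bbeta m S X r) (nhdsWithin 0 (Set.Ioi (0 : ℝ)))}

end

/-!
The density assumption gives `μ(B_Λ(X, t)) ≈ ω_n tⁿ` uniformly for `X ∈ Σ` near `Q` and small
`t`, so the rescaled measures `μ_{Qᵢ,ρᵢ}` give the ball `B(0, s)` mass tending to `sⁿ`.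
Testing the weak convergence against a bump function that equals `1` on `B(0, r/2)` and is
supported in `B(0, r)` shows that a null ball `B(0, r)` for `ν` would force `(r/2)ⁿ ≤ 0`.
-/

theorem omegaN_pos (n : ℕ) : 0 < omegaN n :=
  ENNReal.toReal_pos (measure_ball_pos volume _ one_pos).ne' measure_ball_lt_top.ne

section

variable {n : ℕ} {Λ : Euc n → (Euc n ≃L[ℝ] Euc n)} {μ : Measure (Euc n)} {α : ℝ}
  {ι : Type*} {l : Filter ι} {X : ι → Euc n} {ρ : ι → ℝ} {Q : Euc n}

theorem continuous_TLam (Λ : Euc n → (Euc n ≃L[ℝ] Euc n)) (P : Euc n) (ρ : ℝ) :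
    Continuous (TLam Λ P ρ) := by
  unfold TLam; fun_prop

theorem isOpen_BLam (Λ : Euc n → (Euc n ≃L[ℝ] Euc n)) (P : Euc n) (ρ : ℝ) :
    IsOpen (BLam Λ P ρ) :=
  ((Homeomorph.addLeft P).isOpenMap.comp (Λ P).toHomeomorph.isOpenMap) _ isOpen_ball

theorem preimage_TLam_ball (Λ : Euc n → (Euc n ≃L[ℝ] Euc n)) (P : Euc n) {ρ : ℝ} (hρ : 0 < ρ)
    (s : ℝ) : TLam Λ P ρ ⁻¹' ball 0 s = BLam Λ P (s * ρ) := by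
  ext x
  simp only [TLam, BLam, Set.mem_preimage, mem_ball_zero_iff, map_smul, norm_smul, norm_inv,
    Real.norm_eq_abs, abs_of_pos hρ, ← div_eq_inv_mul, div_lt_iff₀ hρ]
  constructor
  · exact fun h => ⟨(Λ P).symm (x - P), by simpa using h, by simp⟩
  · rintro ⟨w, hw, rfl⟩
    simpa using hw

theorem scaled_ball (Λ : Euc n → (Euc n ≃L[ℝ] Euc n)) (μ : Measure (Euc n)) (P : Euc n)
    {ρ : ℝ} (hρ : 0 < ρ) (s : ℝ) :
    scaled Λ μ P ρ (ball 0 s) = μ (BLam Λ P (s * ρ)) / μ (BLam Λ P ρ) := by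
  rw [scaled, Measure.smul_apply, Measure.map_apply (continuous_TLam Λ P ρ).measurable
    measurableSet_ball, preimage_TLam_ball Λ P hρ, smul_eq_mul, mul_comm, div_eq_mul_inv]

theorem measure_BLam_pos {P : Euc n} (hP : P ∈ msupport μ) {ρ : ℝ} (hρ : 0 < ρ) :
    0 < μ (BLam Λ P ρ) := by
  have hPmem : P ∈ BLam Λ P ρ := ⟨0, mem_ball_self hρ, by simp⟩
  obtain ⟨ε, hε, hsub⟩ := isOpen_iff.1 (isOpen_BLam Λ P ρ) P hPmem
  exact (hP ε hε).trans_le (measure_mono hsub)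

theorem measure_BLam_lt_top [IsLocallyFiniteMeasure μ] (P : Euc n) (ρ : ℝ) :
    μ (BLam Λ P ρ) < ⊤ :=
  (measure_mono (Set.image_mono ball_subset_closedBall)).trans_lt
    ((isCompact_closedBall (0 : Euc n) ρ).image (by fun_prop)).measure_lt_top

theorem isFiniteMeasureOnCompacts_scaled [IsLocallyFiniteMeasure μ] {P : Euc n}
    (hP : P ∈ msupport μ) {ρ : ℝ} (hρ : 0 < ρ) :
    IsFiniteMeasureOnCompacts (scaled Λ μ P ρ) := by
  refine ⟨fun K hK => ?_⟩
  obtain ⟨R, hKR⟩ := hK.isBounded.subset_ball 0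
  calc scaled Λ μ P ρ K ≤ scaled Λ μ P ρ (ball 0 R) := measure_mono hKR
    _ = μ (BLam Λ P (R * ρ)) / μ (BLam Λ P ρ) := scaled_ball Λ μ P hρ R
    _ < ⊤ := ENNReal.div_lt_top (measure_BLam_lt_top P _).ne (measure_BLam_pos hP hρ).ne'

theorem DensityHolder.tendsto_density_ratio (hden : DensityHolder Λ μ α) (hα : 0 < α)
    (hX : ∀ i, X i ∈ msupport μ) (hXQ : Tendsto X l (𝓝 Q)) (hρ : Tendsto ρ l (𝓝[>] 0)) :
    Tendsto (fun i => (μ (BLam Λ (X i) (ρ i))).toReal / (omegaN n * ρ i ^ n)) l (𝓝 1) := by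
  obtain ⟨C, -, hC⟩ := hden (closedBall Q 1) (isCompact_closedBall Q 1)
  have hρα : Tendsto (fun i => C * ρ i ^ α) l (𝓝 0) := by
    have hpow : Tendsto (fun t : ℝ => t ^ α) (𝓝 0) (𝓝 0) := by
      simpa [Real.zero_rpow hα.ne'] using
        (Real.continuousAt_rpow_const 0 α (Or.inr hα.le)).tendsto
    simpa using (hpow.comp (hρ.mono_right nhdsWithin_le_nhds)).const_mul C
  have hXK : ∀ᶠ i in l, X i ∈ closedBall Q 1 := hXQ (closedBall_mem_nhds Q one_pos)
  have hρ01 : ∀ᶠ i in l, ρ i ∈ Set.Ioc 0 1 := hρ (Ioc_mem_nhdsGT one_pos)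
  rw [tendsto_iff_norm_sub_tendsto_zero]
  refine squeeze_zero' (Eventually.of_forall fun _ => norm_nonneg _) ?_ hρα
  filter_upwards [hXK, hρ01] with i hiK hi01
  exact hC (X i) ⟨hX i, hiK⟩ (ρ i) hi01.1 hi01.2

theorem DensityHolder.tendsto_scaled_ball (hden : DensityHolder Λ μ α) (hα : 0 < α)
    (hX : ∀ i, X i ∈ msupport μ) (hXQ : Tendsto X l (𝓝 Q)) (hρ : Tendsto ρ l (𝓝[>] 0))
    {s : ℝ} (hs : 0 < s) :
    Tendsto (fun i => (scaled Λ μ (X i) (ρ i)).real (ball 0 s)) l (𝓝 (s ^ n)) := by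
  have hsρ : Tendsto (fun i => s * ρ i) l (𝓝[>] 0) := by
    rw [tendsto_nhdsWithin_iff] at hρ ⊢
    refine ⟨by simpa using hρ.1.const_mul s, ?_⟩
    filter_upwards [hρ.2] with i (hi : 0 < ρ i)
    exact mul_pos hs hi
  have hlim := ((hden.tendsto_density_ratio hα hX hXQ hsρ).div
    (hden.tendsto_density_ratio hα hX hXQ hρ) one_ne_zero).const_mul (s ^ n)
  rw [div_one, mul_one] at hlim
  refine hlim.congr' ?_
  filter_upwards [hρ self_mem_nhdsWithin] with i (hi : 0 < ρ i)
  have hω := omegaN_pos n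
  rw [Pi.div_apply, measureReal_def, scaled_ball Λ μ (X i) hi, ENNReal.toReal_div, mul_pow]
  field_simp

end

theorem ContDiffBump.measureReal_ball_le_integral {E : Type*} [NormedAddCommGroup E]
    [InnerProductSpace ℝ E] [FiniteDimensional ℝ E] [MeasurableSpace E] [BorelSpace E] {c : E}
    (f : ContDiffBump c) (m : Measure E) [IsFiniteMeasureOnCompacts m] :
    m.real (ball c f.rIn) ≤ ∫ x, f x ∂m := by
  have hf : Integrable f m := f.continuous.integrable_of_hasCompactSupport f.hasCompactSupport
  calc m.real (ball c f.rIn) = 1 * m.real (ball c f.rIn) := (one_mul _).symm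
    _ ≤ ∫ x in ball c f.rIn, f x ∂m :=
      setIntegral_ge_of_const_le_real measurableSet_ball measure_ball_lt_top.ne
        (fun x hx => (f.one_of_mem_closedBall (ball_subset_closedBall hx)).ge) hf.integrableOn
    _ ≤ ∫ x, f x ∂m := setIntegral_le_integral hf (.of_forall fun _ => f.nonneg)

theorem zero_mem_support_pseudo_tangent_general (n : ℕ) (α : ℝ)
    (hα : α ∈ Set.Ioo (0 : ℝ) 1)
    (Λ : Euc n → (Euc n ≃L[ℝ] Euc n))
    (μ : Measure (Euc n)) [IsLocallyFiniteMeasure μ]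
    (hden : DensityHolder Λ μ α)
    (Q : Euc n)
    (ν : Measure (Euc n)) (hν : IsPseudoTangentAt Λ μ Q ν) :
    ∀ r : ℝ, 0 < r → 0 < ν (Metric.ball (0 : Euc n) r) := by
  intro r hr
  obtain ⟨-, Qs, ρs, hQs, hρs, hQsQ, hρs0, hweak⟩ := hν
  refine pos_iff_ne_zero.2 fun hνr => ?_
  let f : ContDiffBump (0 : Euc n) := ⟨r / 2, r, half_pos hr, half_lt_self hr⟩
  have hfν : ∫ x, f x ∂ν = 0 := by
    rw [← setIntegral_eq_integral_of_forall_compl_eq_zero fun x hx =>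
      Function.notMem_support.1 (f.support_eq ▸ hx), Measure.restrict_eq_zero.2 hνr,
      integral_zero_measure]
  have hf_lim := hweak f f.continuous f.hasCompactSupport
  rw [hfν] at hf_lim
  have hball_lim := hden.tendsto_scaled_ball hα.1 hQs hQsQ
    (tendsto_nhdsWithin_iff.2 ⟨hρs0, .of_forall hρs⟩) (half_pos hr)
  have hball_le (i : ℕ) : (scaled Λ μ (Qs i) (ρs i)).real (ball 0 (r / 2)) ≤
      ∫ x, f x ∂scaled Λ μ (Qs i) (ρs i) := by
    have := isFiniteMeasureOnCompacts_scaled (Λ := Λ) (hQs i) (hρs i)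
    exact f.measureReal_ball_le_integral (scaled Λ μ (Qs i) (ρs i))
  exact (pow_pos (half_pos hr) n).not_ge (le_of_tendsto_of_tendsto' hball_lim hf_lim hball_le)

/-- The origin lies in the support of any Λ-pseudo tangent measure. -/
theorem zero_mem_support_pseudo_tangent (n : ℕ) (α β : ℝ)
    (hα : α ∈ Set.Ioo (0 : ℝ) 1) (hβ : β ∈ Set.Ioo (0 : ℝ) 1)
    (Λ : Euc n → (Euc n ≃L[ℝ] Euc n))
    (hPD : ∀ X : Euc n, IsSymPD (clm (Λ X)))
    (hHol : HolderOnCompacts Λ β)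
    (μ : Measure (Euc n)) [IsLocallyFiniteMeasure μ]
    (hden : DensityHolder Λ μ α)
    (Q : Euc n) (hQ : Q ∈ msupport μ)
    (ν : Measure (Euc n)) (hν : IsPseudoTangentAt Λ μ Q ν) :
    ∀ r : ℝ, 0 < r → 0 < ν (Metric.ball (0 : Euc n) r) :=
  zero_mem_support_pseudo_tangent_general n α hα Λ μ hden Q ν hν
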